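/- arXiv:0807.3157 — 2 statements merged into one kernel-verified Lean document; each statement's English description precedes it below -/
import Mathlib

section
/- Let ρ be a rank 2 Drinfeld F_q[t]-module over \overline{k} with ρ_t = θ + κτ + τ², κ ∈ \overline{k}, and let M = M_ρ = \overline{k}(t) ⊗_{\overline{k}[t]} 𝓜_ρ be its associated t-motive, a 2-dimensional \overline{k}(t)-vector space with basis m = [m₁,m₂]^tr and σ-action σm = Φm, Φ = [[0,1],[t−θ, −κ^{(−1)}]]. Then M is simple as a left \overline{k}(t)[σ,σ^{−1}]-module. -/
/-!
If `V ≠ 0` is stable under `σ`, pick `v ∈ V` nonzero; it suffices that `v` and `σ v` are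
linearly independent. Otherwise, with `c = v₀ / v₁`, one gets `c · c⁽⁻¹⁾ - κ⁽⁻¹⁾ c = t - θ` in
`k̄(t)`, which is impossible by comparing degrees in `t`, because twisting preserves degrees.
-/

namespace RatFunc

open Polynomial

variable {K L : Type*} [Field K] [Field L]

lemma map_algebraMap_of_map_C_of_map_X {φ : K →+* L} {τ : RatFunc K →+* RatFunc L}
    (hC : ∀ x, τ (C x) = C (φ x)) (hX : τ X = X) (p : K[X]) :
    τ (algebraMap K[X] (RatFunc K) p) = algebraMap L[X] (RatFunc L) (p.map φ) := by
  have : τ.comp (algebraMap K[X] (RatFunc K)) =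
      (algebraMap L[X] (RatFunc L)).comp (Polynomial.mapRingHom φ) :=
    Polynomial.ringHom_ext (fun x => by simp [algebraMap_C, hC]) (by simp [algebraMap_X, hX])
  exact RingHom.congr_fun this p

lemma intDegree_map_of_map_C_of_map_X {φ : K →+* L} {τ : RatFunc K →+* RatFunc L}
    (hC : ∀ x, τ (C x) = C (φ x)) (hX : τ X = X) (c : RatFunc K) :
    (τ c).intDegree = c.intDegree := by
  rw [← num_div_denom c, map_div₀, map_algebraMap_of_map_C_of_map_X hC hX,
    map_algebraMap_of_map_C_of_map_X hC hX]
  rcases eq_or_ne c 0 with rfl | hc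
  · simp
  have hnum : c.num.map φ ≠ 0 := (Polynomial.map_ne_zero_iff φ.injective).2 (num_ne_zero hc)
  have hden : c.denom.map φ ≠ 0 := (Polynomial.map_ne_zero_iff φ.injective).2 c.denom_ne_zero
  rw [intDegree_div (algebraMap_ne_zero hnum) (algebraMap_ne_zero hden),
    intDegree_div (algebraMap_ne_zero (num_ne_zero hc)) (algebraMap_ne_zero c.denom_ne_zero)]
  simp [natDegree_map]

lemma intDegree_mul_C_le (c : RatFunc K) (a : K) :
    (c * C a).intDegree ≤ max c.intDegree 0 := by
  rcases eq_or_ne a 0 with rfl | ha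
  · simp
  rcases eq_or_ne c 0 with rfl | hc
  · simp
  rw [intDegree_mul hc ((_root_.map_ne_zero C).2 ha), intDegree_C, add_zero]
  exact le_max_left _ _

/-- The left side has degree `2 deg c` when `deg c ≥ 1` and degree `≤ 0` otherwise. -/
lemma mul_map_sub_mul_C_ne_X_sub_C (τ : RatFunc K →+* RatFunc K)
    (hτ : ∀ c, (τ c).intDegree = c.intDegree) (a θ : K) (c : RatFunc K) :
    c * τ c - c * C a ≠ X - C θ := by
  intro h
  have hXθ : (X - C θ : RatFunc K) ≠ 0 := by
    rw [← algebraMap_X, ← algebraMap_C, ← map_sub]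
    exact algebraMap_ne_zero (X_sub_C_ne_zero θ)
  have hdegXθ : (X - C θ : RatFunc K).intDegree = 1 := by
    rw [← algebraMap_X, ← algebraMap_C, ← map_sub, intDegree_polynomial, natDegree_X_sub_C]
    rfl
  have hc : c ≠ 0 := by
    rintro rfl
    exact hXθ (by simpa using h.symm)
  have hτc : τ c ≠ 0 := (_root_.map_ne_zero τ).2 hc
  have hsq : (c * τ c).intDegree = 2 * c.intDegree := by rw [intDegree_mul hc hτc, hτ]; ring
  have hCa := intDegree_mul_C_le c a
  rcases le_or_gt c.intDegree 0 with hd | hd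
  · have := intDegree_add_le (x := -(c * C a)) (mul_ne_zero hc hτc)
      (by rw [← sub_eq_neg_add, h]; exact hXθ)
    rw [← sub_eq_neg_add, h, hdegXθ, intDegree_neg] at this
    omega
  · have hsum : c * τ c = c * C a + (X - C θ) := by rw [← h]; ring
    have := intDegree_add_le (x := c * C a) hXθ (by rw [← hsum]; exact mul_ne_zero hc hτc)
    rw [← hsum, hdegXθ] at this
    omega

end RatFunc

lemma Submodule.eq_top_of_rows_mem_of_det_ne_zero {K n : Type*} [Field K] [Fintype n]
    [DecidableEq n] {V : Submodule K (n → K)} {A : Matrix n n K} (hA : A.det ≠ 0)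
    (hV : ∀ i, A i ∈ V) : V = ⊤ :=
  eq_top_iff.2 <| ((Matrix.linearIndependent_rows_of_det_ne_zero hA).span_eq_top_of_card_eq_finrank'
    (by simp)).ge.trans (Submodule.span_le.2 (Set.range_subset_iff.2 hV))

namespace TMotive

open RatFunc

variable {K : Type*} [Field K]

noncomputable def sigma (τ : RatFunc K →+* RatFunc K) (θ a : K) (v : Fin 2 → RatFunc K) :
    Fin 2 → RatFunc K :=
  Matrix.vecMul (fun i => τ (v i)) ![![0, 1], ![X - C θ, -C a]]

lemma det_sigma (τ : RatFunc K →+* RatFunc K) (θ a : K) (v : Fin 2 → RatFunc K) :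
    (Matrix.of ![v, sigma τ θ a v]).det =
      v 0 * τ (v 0) - v 0 * τ (v 1) * C a - v 1 * τ (v 1) * (X - C θ) := by
  simp [Matrix.det_fin_two, sigma, Matrix.vecMul, dotProduct, Fin.sum_univ_two]
  ring

lemma det_sigma_ne_zero (τ : RatFunc K →+* RatFunc K) (hτ : ∀ c, (τ c).intDegree = c.intDegree)
    (θ a : K) {v : Fin 2 → RatFunc K} (hv : v ≠ 0) :
    (Matrix.of ![v, sigma τ θ a v]).det ≠ 0 := by
  rw [det_sigma]
  rcases eq_or_ne (v 1) 0 with h1 | h1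
  · have h0 : v 0 ≠ 0 := fun h0 => hv (funext (Fin.forall_fin_two.2 ⟨h0, h1⟩))
    simpa [h1] using h0
  · -- the determinant is `v₁ τ(v₁) (c τ(c) - a c - (X - θ))` with `c = v₀ / v₁`
    have hτ1 : τ (v 1) ≠ 0 := (_root_.map_ne_zero τ).2 h1
    have key := mul_map_sub_mul_C_ne_X_sub_C τ hτ a θ (v 0 / v 1)
    rw [map_div₀] at key
    intro h
    apply key
    field_simp
    linear_combination h

end TMotive

theorem drinfeld_t_motive_is_simple_general
    (kb : Type) [Field kb]
    (θk : kb)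
    -- the inverse q-power Frobenius of k̄
    (φ : kb ≃+* kb)
    -- the inverse twist h ↦ h⁽⁻¹⁾ on k̄(t)
    (tw : RatFunc kb ≃+* RatFunc kb)
    (htwC : ∀ x : kb, tw (RatFunc.C x) = RatFunc.C (φ x))
    (htwX : tw RatFunc.X = RatFunc.X)
    (κ : kb) :
    letI Φ : Matrix (Fin 2) (Fin 2) (RatFunc kb) :=
      ![![0, 1], ![RatFunc.X - RatFunc.C θk, -RatFunc.C (φ κ)]]
    -- σ : M → M, σ(v) = (v⁽⁻¹⁾) ᵥ* Φ;  M is simple as a k̄(t)[σ,σ⁻¹]-module: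
    ∀ V : Submodule (RatFunc kb) (Fin 2 → RatFunc kb),
      (∀ v ∈ V, Matrix.vecMul (fun i => tw (v i)) Φ ∈ V) →
      (∀ v : Fin 2 → RatFunc kb, Matrix.vecMul (fun i => tw (v i)) Φ ∈ V → v ∈ V) →
      V = ⊥ ∨ V = ⊤ := by
  intro V hσ _
  refine (eq_or_ne V ⊥).imp_right fun hV => ?_
  obtain ⟨v, hv, hv0⟩ := V.ne_bot_iff.1 hV
  have hdeg : ∀ c, (tw.toRingHom c).intDegree = c.intDegree :=
    RatFunc.intDegree_map_of_map_C_of_map_X (φ := φ.toRingHom) htwC htwX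
  exact Submodule.eq_top_of_rows_mem_of_det_ne_zero
    (TMotive.det_sigma_ne_zero tw.toRingHom hdeg θk (φ κ) hv0)
    (Fin.forall_fin_two.2 ⟨hv, hσ v hv⟩)

theorem drinfeld_t_motive_is_simple
    (Fq : Type) [Field Fq] [Fintype Fq]
    (p q : ℕ) (hp : p.Prime) (hpq : ∃ e : ℕ, 0 < e ∧ q = p ^ e)
    (hcard : Fintype.card Fq = q)
    (kb : Type) [Field kb] [Algebra (RatFunc Fq) kb] [IsAlgClosure (RatFunc Fq) kb]
    (θk : kb) (hθk : θk = algebraMap (RatFunc Fq) kb RatFunc.X)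
    -- the inverse q-power Frobenius of k̄
    (φ : kb ≃+* kb) (hφ : ∀ x : kb, φ (x ^ q) = x)
    -- the inverse twist h ↦ h⁽⁻¹⁾ on k̄(t)
    (tw : RatFunc kb ≃+* RatFunc kb)
    (htwC : ∀ x : kb, tw (RatFunc.C x) = RatFunc.C (φ x))
    (htwX : tw RatFunc.X = RatFunc.X)
    (κ : kb) :
    letI Φ : Matrix (Fin 2) (Fin 2) (RatFunc kb) :=
      ![![0, 1], ![RatFunc.X - RatFunc.C θk, -RatFunc.C (φ κ)]]
    -- σ : M → M, σ(v) = (v⁽⁻¹⁾) ᵥ* Φ;  M is simple as a k̄(t)[σ,σ⁻¹]-module: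
    ∀ V : Submodule (RatFunc kb) (Fin 2 → RatFunc kb),
      (∀ v ∈ V, Matrix.vecMul (fun i => tw (v i)) Φ ∈ V) →
      (∀ v : Fin 2 → RatFunc kb, Matrix.vecMul (fun i => tw (v i)) Φ ∈ V → v ∈ V) →
      V = ⊥ ∨ V = ⊤ :=
  drinfeld_t_motive_is_simple_general kb θk φ tw htwC htwX κ
end

section
/- Let \overline{k} be an algebraic closure of k = F_q(θ), and let h ↦ h^{(−1)} denote the field automorphism of the rational function field \overline{k}(t) that fixes t and applies the inverse x ↦ x^{1/q} of the q-power Frobenius of \overline{k} to every coefficient. Then for every κ ∈ \overline{k} there exists no f ∈ \overline{k}(t)^× satisfying t − θ = (f^{(−1)} − κ^{(−1)})·f in \overline{k}(t). -/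
/-!
STATEMENT 7: Let `k̄` be an algebraic closure of `k = 𝔽_q(θ)`, and let `h ↦ h⁽⁻¹⁾` denote the
field automorphism of the rational function field `k̄(t)` fixing `t` and applying the inverse
`x ↦ x^{1/q}` of the `q`-power Frobenius of `k̄` to every coefficient.  Then for every `κ ∈ k̄`
there is no `f ∈ k̄(t)ˣ` with `t − θ = (f⁽⁻¹⁾ − κ⁽⁻¹⁾)·f` in `k̄(t)`.

Here we take `k̄ := AlgebraicClosure (RatFunc Fq)` (where `RatFunc Fq = 𝔽_q(θ)`, the variable of
`RatFunc Fq` playing the role of `θ`), `φ : k̄ ≃+* k̄` the inverse of the `q`-power Frobenius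
(characterized by `φ (x^q) = x`), and `tw : k̄(t) ≃+* k̄(t)` the automorphism `h ↦ h⁽⁻¹⁾`
(characterized by `tw (C x) = C (φ x)` and `tw X = X`).
-/

noncomputable section

theorem no_solution_of_rank2_difference_equation
    (Fq : Type) [Field Fq] [Fintype Fq]
    (p q : ℕ) (hp : p.Prime) (hpq : ∃ e : ℕ, 0 < e ∧ q = p ^ e)
    (hcard : Fintype.card Fq = q)
    (kb : Type) [Field kb] [Algebra (RatFunc Fq) kb] [IsAlgClosure (RatFunc Fq) kb]
    -- θ, the image in k̄ of the variable of k = 𝔽_q(θ)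
    (θk : kb) (hθk : θk = algebraMap (RatFunc Fq) kb RatFunc.X)
    -- the inverse `x ↦ x^{1/q}` of the q-power Frobenius of k̄
    (φ : kb ≃+* kb) (hφ : ∀ x : kb, φ (x ^ q) = x)
    -- the automorphism `h ↦ h⁽⁻¹⁾` of k̄(t), fixing t, applying φ to coefficients
    (tw : RatFunc kb ≃+* RatFunc kb)
    (htwC : ∀ x : kb, tw (RatFunc.C x) = RatFunc.C (φ x))
    (htwX : tw RatFunc.X = RatFunc.X)
    (κ : kb) :
    ¬ ∃ f : RatFunc kb, f ≠ 0 ∧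
        RatFunc.X - RatFunc.C θk = (tw f - RatFunc.C (φ κ)) * f := by
  -- tw on polynomials
  have tw_poly : ∀ P : Polynomial kb,
      tw (algebraMap (Polynomial kb) (RatFunc kb) P)
        = algebraMap (Polynomial kb) (RatFunc kb) (P.map (φ : kb →+* kb)) := by
    intro P
    induction P using Polynomial.induction_on with
    | C a => rw [RatFunc.algebraMap_C, htwC, Polynomial.map_C, RatFunc.algebraMap_C]; rfl
    | add f g hf hg => rw [map_add, map_add, hf, hg, Polynomial.map_add, map_add]
    | monomial n a ih =>
        rw [map_mul, map_mul, map_pow, map_pow, RatFunc.algebraMap_C,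
          RatFunc.algebraMap_X, htwC, htwX]
        rw [Polynomial.map_mul, Polynomial.map_C, Polynomial.map_pow, Polynomial.map_X,
          map_mul, map_pow, RatFunc.algebraMap_C, RatFunc.algebraMap_X]
        rfl
  -- tw preserves intDegree
  have tw_deg : ∀ f : RatFunc kb, f ≠ 0 → (tw f).intDegree = f.intDegree := by
    intro f hf
    have hnum : f.num ≠ 0 := RatFunc.num_ne_zero hf
    have hden : f.denom ≠ 0 := f.denom_ne_zero
    have key : f * algebraMap (Polynomial kb) (RatFunc kb) f.denom
        = algebraMap (Polynomial kb) (RatFunc kb) f.num :=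
      ((div_eq_iff (RatFunc.algebraMap_ne_zero hden)).mp (RatFunc.num_div_denom f)).symm
    have key2 := congrArg tw key
    rw [map_mul, tw_poly, tw_poly] at key2
    have hdenm : (f.denom.map (φ : kb →+* kb)) ≠ 0 := by
      simpa [Polynomial.map_ne_zero_iff (f := (φ : kb →+* kb)) φ.injective] using hden
    have hdeg := congrArg RatFunc.intDegree key2
    rw [RatFunc.intDegree_mul (by simpa using hf) (RatFunc.algebraMap_ne_zero hdenm),
      RatFunc.intDegree_polynomial, RatFunc.intDegree_polynomial,
      Polynomial.natDegree_map, Polynomial.natDegree_map] at hdeg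
    have : f.intDegree = (f.num.natDegree : ℤ) - f.denom.natDegree := rfl
    omega
  rintro ⟨f, hf, heq⟩
  have htwf : tw f ≠ 0 := by simpa using hf
  have hL : (RatFunc.X - RatFunc.C θk : RatFunc kb).intDegree = 1 := by
    have : (RatFunc.X - RatFunc.C θk : RatFunc kb)
        = algebraMap (Polynomial kb) (RatFunc kb) (Polynomial.X - Polynomial.C θk) := by
      rw [map_sub, RatFunc.algebraMap_C, RatFunc.algebraMap_X]
    rw [this, RatFunc.intDegree_polynomial, Polynomial.natDegree_X_sub_C, Nat.cast_one]
  have hLne : (RatFunc.X - RatFunc.C θk : RatFunc kb) ≠ 0 := by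
    intro h
    rw [h] at hL
    simp [RatFunc.intDegree_zero] at hL
  have hg : tw f - RatFunc.C (φ κ) ≠ 0 := by
    intro h
    rw [h, zero_mul] at heq
    exact hLne heq
  have hdeg := congrArg RatFunc.intDegree heq
  rw [hL, RatFunc.intDegree_mul hg hf] at hdeg
  set m := f.intDegree with hm
  have htwdeg : (tw f).intDegree = m := tw_deg f hf
  -- bound intDegree (tw f - C (φ κ))
  by_cases hκ : φ κ = 0
  · rw [hκ] at hdeg
    simp only [map_zero, sub_zero] at hdeg
    rw [htwdeg] at hdeg
    omega
  · have hCκ : (RatFunc.C (φ κ) : RatFunc kb) ≠ 0 := by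
      simpa using hκ
    have hCdeg : (RatFunc.C (φ κ) : RatFunc kb).intDegree = 0 := RatFunc.intDegree_C _
    -- g ≤ max(m, 0)
    have h1 : (tw f - RatFunc.C (φ κ)).intDegree ≤ max m 0 := by
      have := RatFunc.intDegree_add_le (x := tw f) (y := -RatFunc.C (φ κ))
        (by simpa using hCκ) (by simpa [sub_eq_add_neg] using hg)
      rw [RatFunc.intDegree_neg, htwdeg, hCdeg] at this
      simpa [sub_eq_add_neg] using this
    -- m ≤ max(deg g, 0)  since tw f = g + C
    have h2 : m ≤ max (tw f - RatFunc.C (φ κ)).intDegree 0 := by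
      have hsum : (tw f - RatFunc.C (φ κ)) + RatFunc.C (φ κ) = tw f := by ring
      have := RatFunc.intDegree_add_le (x := tw f - RatFunc.C (φ κ))
        (y := RatFunc.C (φ κ)) hCκ (by rw [hsum]; exact htwf)
      rw [hsum, htwdeg, hCdeg] at this
      exact this
    omega
end
end
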